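/- arXiv:1507.06675 — 7 statements merged into one kernel-verified Lean document; each statement's English description precedes it below -/
import Mathlib

section
/- Let A be a commutative differential algebra over a field k of characteristic zero, and define on A a Lie bracket by [a,b] = a·b′ − a′·b (the Lie algebra of special derivations Diff A). Then Diff A satisfies the standard Lie identity of degree 5: for all x1,x2,x3,x4,z ∈ A, the sum over all permutations σ ∈ S4 of sgn(σ)·[xσ(1),[xσ(2),[xσ(3),[xσ(4),z]]]] equals 0. -/
open Finset

/-- The Lie bracket of special derivations: `[a,b] = a·D(b) − D(a)·b`. -/
def diffBracket {A : Type*} [CommRing A] (D : A → A) (a b : A) : A :=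
  a * D b - D a * b

private def sp0 : Equiv.Perm (Fin 4) := ⟨![0,1,2,3], ![0,1,2,3], by decide, by decide⟩
private def sp1 : Equiv.Perm (Fin 4) := ⟨![0,1,3,2], ![0,1,3,2], by decide, by decide⟩
private def sp2 : Equiv.Perm (Fin 4) := ⟨![0,2,1,3], ![0,2,1,3], by decide, by decide⟩
private def sp3 : Equiv.Perm (Fin 4) := ⟨![0,2,3,1], ![0,3,1,2], by decide, by decide⟩
private def sp4 : Equiv.Perm (Fin 4) := ⟨![0,3,1,2], ![0,2,3,1], by decide, by decide⟩
private def sp5 : Equiv.Perm (Fin 4) := ⟨![0,3,2,1], ![0,3,2,1], by decide, by decide⟩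
private def sp6 : Equiv.Perm (Fin 4) := ⟨![1,0,2,3], ![1,0,2,3], by decide, by decide⟩
private def sp7 : Equiv.Perm (Fin 4) := ⟨![1,0,3,2], ![1,0,3,2], by decide, by decide⟩
private def sp8 : Equiv.Perm (Fin 4) := ⟨![1,2,0,3], ![2,0,1,3], by decide, by decide⟩
private def sp9 : Equiv.Perm (Fin 4) := ⟨![1,2,3,0], ![3,0,1,2], by decide, by decide⟩
private def sp10 : Equiv.Perm (Fin 4) := ⟨![1,3,0,2], ![2,0,3,1], by decide, by decide⟩
private def sp11 : Equiv.Perm (Fin 4) := ⟨![1,3,2,0], ![3,0,2,1], by decide, by decide⟩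
private def sp12 : Equiv.Perm (Fin 4) := ⟨![2,0,1,3], ![1,2,0,3], by decide, by decide⟩
private def sp13 : Equiv.Perm (Fin 4) := ⟨![2,0,3,1], ![1,3,0,2], by decide, by decide⟩
private def sp14 : Equiv.Perm (Fin 4) := ⟨![2,1,0,3], ![2,1,0,3], by decide, by decide⟩
private def sp15 : Equiv.Perm (Fin 4) := ⟨![2,1,3,0], ![3,1,0,2], by decide, by decide⟩
private def sp16 : Equiv.Perm (Fin 4) := ⟨![2,3,0,1], ![2,3,0,1], by decide, by decide⟩
private def sp17 : Equiv.Perm (Fin 4) := ⟨![2,3,1,0], ![3,2,0,1], by decide, by decide⟩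
private def sp18 : Equiv.Perm (Fin 4) := ⟨![3,0,1,2], ![1,2,3,0], by decide, by decide⟩
private def sp19 : Equiv.Perm (Fin 4) := ⟨![3,0,2,1], ![1,3,2,0], by decide, by decide⟩
private def sp20 : Equiv.Perm (Fin 4) := ⟨![3,1,0,2], ![2,1,3,0], by decide, by decide⟩
private def sp21 : Equiv.Perm (Fin 4) := ⟨![3,1,2,0], ![3,1,2,0], by decide, by decide⟩
private def sp22 : Equiv.Perm (Fin 4) := ⟨![3,2,0,1], ![2,3,1,0], by decide, by decide⟩
private def sp23 : Equiv.Perm (Fin 4) := ⟨![3,2,1,0], ![3,2,1,0], by decide, by decide⟩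

private def gperm : Fin 24 → Equiv.Perm (Fin 4) := ![sp0, sp1, sp2, sp3, sp4, sp5, sp6, sp7, sp8, sp9, sp10, sp11, sp12, sp13, sp14, sp15, sp16, sp17, sp18, sp19, sp20, sp21, sp22, sp23]

private lemma hg : Function.Bijective gperm := by decide

private lemma sgn0 : (Equiv.Perm.sign sp0 : ℤ) = 1 := by decide
private lemma ap0_0 : sp0 (0 : Fin 4) = 0 := rfl
private lemma ap0_1 : sp0 (1 : Fin 4) = 1 := rfl
private lemma ap0_2 : sp0 (2 : Fin 4) = 2 := rfl
private lemma ap0_3 : sp0 (3 : Fin 4) = 3 := rfl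
private lemma sgn1 : (Equiv.Perm.sign sp1 : ℤ) = -1 := by decide
private lemma ap1_0 : sp1 (0 : Fin 4) = 0 := rfl
private lemma ap1_1 : sp1 (1 : Fin 4) = 1 := rfl
private lemma ap1_2 : sp1 (2 : Fin 4) = 3 := rfl
private lemma ap1_3 : sp1 (3 : Fin 4) = 2 := rfl
private lemma sgn2 : (Equiv.Perm.sign sp2 : ℤ) = -1 := by decide
private lemma ap2_0 : sp2 (0 : Fin 4) = 0 := rfl
private lemma ap2_1 : sp2 (1 : Fin 4) = 2 := rfl
private lemma ap2_2 : sp2 (2 : Fin 4) = 1 := rfl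
private lemma ap2_3 : sp2 (3 : Fin 4) = 3 := rfl
private lemma sgn3 : (Equiv.Perm.sign sp3 : ℤ) = 1 := by decide
private lemma ap3_0 : sp3 (0 : Fin 4) = 0 := rfl
private lemma ap3_1 : sp3 (1 : Fin 4) = 2 := rfl
private lemma ap3_2 : sp3 (2 : Fin 4) = 3 := rfl
private lemma ap3_3 : sp3 (3 : Fin 4) = 1 := rfl
private lemma sgn4 : (Equiv.Perm.sign sp4 : ℤ) = 1 := by decide
private lemma ap4_0 : sp4 (0 : Fin 4) = 0 := rfl
private lemma ap4_1 : sp4 (1 : Fin 4) = 3 := rfl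
private lemma ap4_2 : sp4 (2 : Fin 4) = 1 := rfl
private lemma ap4_3 : sp4 (3 : Fin 4) = 2 := rfl
private lemma sgn5 : (Equiv.Perm.sign sp5 : ℤ) = -1 := by decide
private lemma ap5_0 : sp5 (0 : Fin 4) = 0 := rfl
private lemma ap5_1 : sp5 (1 : Fin 4) = 3 := rfl
private lemma ap5_2 : sp5 (2 : Fin 4) = 2 := rfl
private lemma ap5_3 : sp5 (3 : Fin 4) = 1 := rfl
private lemma sgn6 : (Equiv.Perm.sign sp6 : ℤ) = -1 := by decide
private lemma ap6_0 : sp6 (0 : Fin 4) = 1 := rfl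
private lemma ap6_1 : sp6 (1 : Fin 4) = 0 := rfl
private lemma ap6_2 : sp6 (2 : Fin 4) = 2 := rfl
private lemma ap6_3 : sp6 (3 : Fin 4) = 3 := rfl
private lemma sgn7 : (Equiv.Perm.sign sp7 : ℤ) = 1 := by decide
private lemma ap7_0 : sp7 (0 : Fin 4) = 1 := rfl
private lemma ap7_1 : sp7 (1 : Fin 4) = 0 := rfl
private lemma ap7_2 : sp7 (2 : Fin 4) = 3 := rfl
private lemma ap7_3 : sp7 (3 : Fin 4) = 2 := rfl
private lemma sgn8 : (Equiv.Perm.sign sp8 : ℤ) = 1 := by decide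
private lemma ap8_0 : sp8 (0 : Fin 4) = 1 := rfl
private lemma ap8_1 : sp8 (1 : Fin 4) = 2 := rfl
private lemma ap8_2 : sp8 (2 : Fin 4) = 0 := rfl
private lemma ap8_3 : sp8 (3 : Fin 4) = 3 := rfl
private lemma sgn9 : (Equiv.Perm.sign sp9 : ℤ) = -1 := by decide
private lemma ap9_0 : sp9 (0 : Fin 4) = 1 := rfl
private lemma ap9_1 : sp9 (1 : Fin 4) = 2 := rfl
private lemma ap9_2 : sp9 (2 : Fin 4) = 3 := rfl
private lemma ap9_3 : sp9 (3 : Fin 4) = 0 := rfl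
private lemma sgn10 : (Equiv.Perm.sign sp10 : ℤ) = -1 := by decide
private lemma ap10_0 : sp10 (0 : Fin 4) = 1 := rfl
private lemma ap10_1 : sp10 (1 : Fin 4) = 3 := rfl
private lemma ap10_2 : sp10 (2 : Fin 4) = 0 := rfl
private lemma ap10_3 : sp10 (3 : Fin 4) = 2 := rfl
private lemma sgn11 : (Equiv.Perm.sign sp11 : ℤ) = 1 := by decide
private lemma ap11_0 : sp11 (0 : Fin 4) = 1 := rfl
private lemma ap11_1 : sp11 (1 : Fin 4) = 3 := rfl
private lemma ap11_2 : sp11 (2 : Fin 4) = 2 := rfl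
private lemma ap11_3 : sp11 (3 : Fin 4) = 0 := rfl
private lemma sgn12 : (Equiv.Perm.sign sp12 : ℤ) = 1 := by decide
private lemma ap12_0 : sp12 (0 : Fin 4) = 2 := rfl
private lemma ap12_1 : sp12 (1 : Fin 4) = 0 := rfl
private lemma ap12_2 : sp12 (2 : Fin 4) = 1 := rfl
private lemma ap12_3 : sp12 (3 : Fin 4) = 3 := rfl
private lemma sgn13 : (Equiv.Perm.sign sp13 : ℤ) = -1 := by decide
private lemma ap13_0 : sp13 (0 : Fin 4) = 2 := rfl
private lemma ap13_1 : sp13 (1 : Fin 4) = 0 := rfl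
private lemma ap13_2 : sp13 (2 : Fin 4) = 3 := rfl
private lemma ap13_3 : sp13 (3 : Fin 4) = 1 := rfl
private lemma sgn14 : (Equiv.Perm.sign sp14 : ℤ) = -1 := by decide
private lemma ap14_0 : sp14 (0 : Fin 4) = 2 := rfl
private lemma ap14_1 : sp14 (1 : Fin 4) = 1 := rfl
private lemma ap14_2 : sp14 (2 : Fin 4) = 0 := rfl
private lemma ap14_3 : sp14 (3 : Fin 4) = 3 := rfl
private lemma sgn15 : (Equiv.Perm.sign sp15 : ℤ) = 1 := by decide
private lemma ap15_0 : sp15 (0 : Fin 4) = 2 := rfl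
private lemma ap15_1 : sp15 (1 : Fin 4) = 1 := rfl
private lemma ap15_2 : sp15 (2 : Fin 4) = 3 := rfl
private lemma ap15_3 : sp15 (3 : Fin 4) = 0 := rfl
private lemma sgn16 : (Equiv.Perm.sign sp16 : ℤ) = 1 := by decide
private lemma ap16_0 : sp16 (0 : Fin 4) = 2 := rfl
private lemma ap16_1 : sp16 (1 : Fin 4) = 3 := rfl
private lemma ap16_2 : sp16 (2 : Fin 4) = 0 := rfl
private lemma ap16_3 : sp16 (3 : Fin 4) = 1 := rfl
private lemma sgn17 : (Equiv.Perm.sign sp17 : ℤ) = -1 := by decide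
private lemma ap17_0 : sp17 (0 : Fin 4) = 2 := rfl
private lemma ap17_1 : sp17 (1 : Fin 4) = 3 := rfl
private lemma ap17_2 : sp17 (2 : Fin 4) = 1 := rfl
private lemma ap17_3 : sp17 (3 : Fin 4) = 0 := rfl
private lemma sgn18 : (Equiv.Perm.sign sp18 : ℤ) = -1 := by decide
private lemma ap18_0 : sp18 (0 : Fin 4) = 3 := rfl
private lemma ap18_1 : sp18 (1 : Fin 4) = 0 := rfl
private lemma ap18_2 : sp18 (2 : Fin 4) = 1 := rfl
private lemma ap18_3 : sp18 (3 : Fin 4) = 2 := rfl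
private lemma sgn19 : (Equiv.Perm.sign sp19 : ℤ) = 1 := by decide
private lemma ap19_0 : sp19 (0 : Fin 4) = 3 := rfl
private lemma ap19_1 : sp19 (1 : Fin 4) = 0 := rfl
private lemma ap19_2 : sp19 (2 : Fin 4) = 2 := rfl
private lemma ap19_3 : sp19 (3 : Fin 4) = 1 := rfl
private lemma sgn20 : (Equiv.Perm.sign sp20 : ℤ) = 1 := by decide
private lemma ap20_0 : sp20 (0 : Fin 4) = 3 := rfl
private lemma ap20_1 : sp20 (1 : Fin 4) = 1 := rfl
private lemma ap20_2 : sp20 (2 : Fin 4) = 0 := rfl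
private lemma ap20_3 : sp20 (3 : Fin 4) = 2 := rfl
private lemma sgn21 : (Equiv.Perm.sign sp21 : ℤ) = -1 := by decide
private lemma ap21_0 : sp21 (0 : Fin 4) = 3 := rfl
private lemma ap21_1 : sp21 (1 : Fin 4) = 1 := rfl
private lemma ap21_2 : sp21 (2 : Fin 4) = 2 := rfl
private lemma ap21_3 : sp21 (3 : Fin 4) = 0 := rfl
private lemma sgn22 : (Equiv.Perm.sign sp22 : ℤ) = -1 := by decide
private lemma ap22_0 : sp22 (0 : Fin 4) = 3 := rfl
private lemma ap22_1 : sp22 (1 : Fin 4) = 2 := rfl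
private lemma ap22_2 : sp22 (2 : Fin 4) = 0 := rfl
private lemma ap22_3 : sp22 (3 : Fin 4) = 1 := rfl
private lemma sgn23 : (Equiv.Perm.sign sp23 : ℤ) = 1 := by decide
private lemma ap23_0 : sp23 (0 : Fin 4) = 3 := rfl
private lemma ap23_1 : sp23 (1 : Fin 4) = 2 := rfl
private lemma ap23_2 : sp23 (2 : Fin 4) = 1 := rfl
private lemma ap23_3 : sp23 (3 : Fin 4) = 0 := rfl

/-- the Lie algebra of special derivations of a commutative differential
algebra over a field of characteristic zero satisfies the standard Lie identity of
degree 5. -/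
theorem diff_satisfies_st5 {k A : Type*} [Field k] [CharZero k] [CommRing A] [Algebra k A]
    (D : A → A) (hDlin : IsLinearMap k D)
    (hLeib : ∀ a b : A, D (a * b) = a * D b + D a * b)
    (x : Fin 4 → A) (z : A) :
    ∑ σ : Equiv.Perm (Fin 4), (Equiv.Perm.sign σ : ℤ) •
      diffBracket D (x (σ 0)) (diffBracket D (x (σ 1))
        (diffBracket D (x (σ 2)) (diffBracket D (x (σ 3)) z))) = 0 := by
  have hsub : ∀ u v : A, D (u - v) = D u - D v := fun u v =>
    (IsLinearMap.mk' D hDlin).map_sub u v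
  have key := Fintype.sum_bijective gperm hg
      (fun i => (Equiv.Perm.sign (gperm i) : ℤ) •
        diffBracket D (x (gperm i 0)) (diffBracket D (x (gperm i 1))
          (diffBracket D (x (gperm i 2)) (diffBracket D (x (gperm i 3)) z))))
      (fun σ => (Equiv.Perm.sign σ : ℤ) •
        diffBracket D (x (σ 0)) (diffBracket D (x (σ 1))
          (diffBracket D (x (σ 2)) (diffBracket D (x (σ 3)) z))))
      (fun i => rfl)
  rw [← key]
  simp only [Fin.sum_univ_succ, Fin.sum_univ_zero, gperm,
    Matrix.cons_val_zero, Matrix.cons_val_one, Matrix.head_cons, Matrix.cons_val_succ,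
    sgn0, sgn1, sgn2, sgn3, sgn4, sgn5, sgn6, sgn7, sgn8, sgn9, sgn10, sgn11, sgn12, sgn13, sgn14, sgn15, sgn16, sgn17, sgn18, sgn19, sgn20, sgn21, sgn22, sgn23,
    ap0_0, ap0_1, ap0_2, ap0_3, ap1_0, ap1_1, ap1_2, ap1_3, ap2_0, ap2_1, ap2_2, ap2_3, ap3_0, ap3_1, ap3_2, ap3_3, ap4_0, ap4_1, ap4_2, ap4_3, ap5_0, ap5_1, ap5_2, ap5_3, ap6_0, ap6_1, ap6_2, ap6_3, ap7_0, ap7_1, ap7_2, ap7_3, ap8_0, ap8_1, ap8_2, ap8_3, ap9_0, ap9_1, ap9_2, ap9_3, ap10_0, ap10_1, ap10_2, ap10_3, ap11_0, ap11_1, ap11_2, ap11_3, ap12_0, ap12_1, ap12_2, ap12_3, ap13_0, ap13_1, ap13_2, ap13_3, ap14_0, ap14_1, ap14_2, ap14_3, ap15_0, ap15_1, ap15_2, ap15_3, ap16_0, ap16_1, ap16_2, ap16_3, ap17_0, ap17_1, ap17_2, ap17_3, ap18_0, ap18_1, ap18_2, ap18_3, ap19_0, ap19_1, ap19_2, ap19_3,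 ap20_0, ap20_1, ap20_2, ap20_3, ap21_0, ap21_1, ap21_2, ap21_3, ap22_0, ap22_1, ap22_2, ap22_3, ap23_0, ap23_1, ap23_2, ap23_3,
    one_smul, neg_smul, diffBracket, hLeib, hsub]
  ring
end

section
/- Let A be a prime differential ring with derivation D and let a, b ∈ A. Among all pairs (i, j) of nonnegative integers with D^i(a)·D^j(b) ≠ 0, choose one minimizing i + j, and among those choose one with minimal j. Then j = 0, i.e., D^i(a)·b ≠ 0 for some i. -/
/-- An ideal of a differential ring is a differential ideal if it is closed under
the derivation. -/
def IsDifferentialIdeal {A : Type*} [Ring A] (D : A → A) (I : Ideal A) : Prop :=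
  ∀ a ∈ I, D a ∈ I

/-- A differential ring is prime if the product of any two nonzero differential
ideals is nonzero. -/
def IsPrimeDifferentialRing {A : Type*} [Ring A] (D : A → A) : Prop :=
  ∀ I J : Ideal A, IsDifferentialIdeal D I → IsDifferentialIdeal D J →
    I ≠ ⊥ → J ≠ ⊥ → I * J ≠ ⊥

/-!
If `j = k + 1`, then `D^i a · D^k b = 0` because `i + k < i + j`. Differentiating this
product gives `D^i a · D^j b + D^(i+1) a · D^k b = 0`, so `D^(i+1) a · D^k b ≠ 0`: a pair with
the same total order `i + j` but a smaller second index `k < j`, contradicting the choice of `j`.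
-/

section Leibniz

variable {A : Type*} {D : A → A}

theorem map_zero_of_leibniz [NonUnitalNonAssocSemiring A]
    (hLeib : ∀ a b : A, D (a * b) = a * D b + D a * b) : D 0 = 0 := by
  simpa using hLeib 0 0

theorem mul_map_eq_zero_iff_of_mul_eq_zero [NonUnitalNonAssocRing A]
    (hLeib : ∀ a b : A, D (a * b) = a * D b + D a * b) {x y : A} (hxy : x * y = 0) :
    x * D y = 0 ↔ D x * y = 0 := by
  have hsum : x * D y + D x * y = 0 := by
    rw [← hLeib, hxy, map_zero_of_leibniz hLeib]
  constructor <;> intro h <;> simpa [h] using hsum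

end Leibniz

theorem minimal_pair_has_j_eq_zero_general {A : Type*} [Ring A] (D : A → A)
    (hLeib : ∀ a b : A, D (a * b) = a * D b + D a * b)
    (a b : A) (i j : ℕ)
    (hij : D^[i] a * D^[j] b ≠ 0)
    (hmin_sum : ∀ i' j' : ℕ, D^[i'] a * D^[j'] b ≠ 0 → i + j ≤ i' + j')
    (hmin_j : ∀ i' j' : ℕ, D^[i'] a * D^[j'] b ≠ 0 → i' + j' = i + j → j ≤ j') :
    j = 0 := by
  by_contra hj
  obtain ⟨k, rfl⟩ := Nat.exists_eq_succ_of_ne_zero hj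
  have hzero : D^[i] a * D^[k] b = 0 := by
    by_contra h
    have := hmin_sum i k h
    omega
  have hne : D^[i + 1] a * D^[k] b ≠ 0 := by
    rw [Function.iterate_succ_apply', Ne, ← mul_map_eq_zero_iff_of_mul_eq_zero hLeib hzero,
      ← Function.iterate_succ_apply' D k]
    exact hij
  have := hmin_j (i + 1) k hne (by omega)
  omega

/-- in a prime differential ring, if `(i, j)` is chosen among the pairs
with `D^i(a)·D^j(b) ≠ 0` so as to minimize `i + j`, and among those with minimal `j`,
then `j = 0`. -/
theorem minimal_pair_has_j_eq_zero {A : Type*} [Ring A] (D : A → A)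
    (hadd : ∀ a b : A, D (a + b) = D a + D b)
    (hLeib : ∀ a b : A, D (a * b) = a * D b + D a * b)
    (hprime : IsPrimeDifferentialRing D)
    (a b : A) (i j : ℕ)
    (hij : D^[i] a * D^[j] b ≠ 0)
    (hmin_sum : ∀ i' j' : ℕ, D^[i'] a * D^[j'] b ≠ 0 → i + j ≤ i' + j')
    (hmin_j : ∀ i' j' : ℕ, D^[i'] a * D^[j'] b ≠ 0 → i' + j' = i + j → j ≤ j') :
    j = 0 :=
  minimal_pair_has_j_eq_zero_general D hLeib a b i j hij hmin_sum hmin_j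
end

section
/- Let A be a prime commutative differential algebra over a field of characteristic zero. Suppose a, b ∈ A and a·D(x) + b·x = 0 for all x ∈ A. Then a = 0 and b = 0. -/
/-- in a prime commutative differential algebra over a field of
characteristic zero with nonzero derivation, if `a·D(x) + b·x = 0` for all `x`,
then `a = 0` and `b = 0`. -/
theorem linear_diff_identity_trivial {k A : Type*} [Field k] [CharZero k] [CommRing A]
    [Algebra k A]
    (D : A → A) (hDlin : IsLinearMap k D)
    (hLeib : ∀ a b : A, D (a * b) = a * D b + D a * b)
    (hprime : IsPrimeDifferentialRing D)
    (hD : D ≠ 0)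
    (a b : A) (h : ∀ x : A, a * D x + b * x = 0) :
    a = 0 ∧ b = 0 := by
  have hD1 : D 1 = 0 := by
    have h1 := hLeib 1 1
    simp only [one_mul, mul_one] at h1
    have : D 1 + D 1 = D 1 + 0 := by rw [add_zero, ← h1]
    exact add_left_cancel this
  -- b = 0
  have hb : b = 0 := by
    have := h 1
    simpa [hD1] using this
  subst hb
  have ha' : ∀ x : A, a * D x = 0 := fun x => by simpa using h x
  -- J = span of range D, a nonzero differential ideal
  set J : Ideal A := Ideal.span (Set.range D) with hJdef
  have hJmem : ∀ x : A, D x ∈ J := fun x => Ideal.subset_span ⟨x, rfl⟩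
  have hJdiff : IsDifferentialIdeal D J := by
    intro y hy
    induction hy using Submodule.span_induction with
    | mem z hz =>
      obtain ⟨x, rfl⟩ := hz
      exact hJmem (D x)
    | zero =>
      have hD0 : D (0:A) = D 0 + D 0 := by simpa using hDlin.map_add 0 0
      rw [left_eq_add.mp hD0]; exact J.zero_mem
    | add u v hu hv ihu ihv =>
      rw [hDlin.map_add]; exact J.add_mem ihu ihv
    | smul r u hu ihu =>
      rw [smul_eq_mul, hLeib r u]
      exact J.add_mem (Ideal.mul_mem_left _ _ ihu) (Ideal.mul_mem_left _ _ hu)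
  have hJne : J ≠ ⊥ := by
    intro hbot
    apply hD
    funext x
    have : D x ∈ (⊥ : Ideal A) := hbot ▸ hJmem x
    simpa using this
  -- I = annihilator of J
  set I : Ideal A := { carrier := {y | ∀ j ∈ J, y * j = 0}
                       zero_mem' := by intro j hj; simp
                       add_mem' := by
                         intro u v hu hv j hj
                         rw [add_mul, hu j hj, hv j hj, add_zero]
                       smul_mem' := by
                         intro r u hu j hj
                         rw [smul_eq_mul, mul_assoc, hu j hj, mul_zero] } with hIdef
  have hImem : ∀ y, y ∈ I ↔ ∀ j ∈ J, y * j = 0 := fun y => Iff.rfl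
  have hIdiff : IsDifferentialIdeal D I := by
    intro y hy j hj
    have h1 : D (y * j) = y * D j + D y * j := hLeib y j
    have h2 : y * j = 0 := (hImem y).mp hy j hj
    have h3 : y * D j = 0 := (hImem y).mp hy (D j) (hJdiff j hj)
    have h4 : D (0 : A) = 0 := by
      have h5 : D (0:A) = D 0 + D 0 := by simpa using hDlin.map_add 0 0
      exact left_eq_add.mp h5
    rw [h2, h4, h3] at h1
    simpa using h1.symm
  have haI : a ∈ I := by
    rw [hImem]
    intro j hj
    induction hj using Submodule.span_induction with
    | mem z hz => obtain ⟨x, rfl⟩ := hz; exact ha' x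
    | zero => simp
    | add u v hu hv ihu ihv => rw [mul_add, ihu, ihv, add_zero]
    | smul r u hu ihu => rw [smul_eq_mul, mul_left_comm, ihu, mul_zero]
  have hIJ : I * J = ⊥ := by
    rw [eq_bot_iff]
    rw [Ideal.mul_le]
    intro r hr s hs
    have : r * s = 0 := (hImem r).mp hr s hs
    simp [this]
  have hIbot : I = ⊥ := by
    by_contra hne
    exact hprime I J hIdiff hJdiff hne hJne hIJ
  have : a = 0 := by
    have := hIbot ▸ haI
    simpa using this
  exact ⟨this, rfl⟩
end

section
/- Let A be a commutative differential algebra and suppose p(x) = Σ_{i=0}^{n} c_i·D^i(x) (with c_i ∈ A, n ≥ 2, c_n ≠ 0) vanishes for all x ∈ A, over a field of characteristic zero. Define q(x,y) = p(xy) − x·p(y) − y·p(x). Then the coefficient of D^{n−1}(x)·D(y) in the multilinear differential polynomial q is n·c_n; in particular q is a nonzero differential polynomial. -/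
open Finset MvPolynomial

lemma coeff_CXX {R σ : Type*} [CommRing R] [DecidableEq σ] (a : R) (u v : σ) (m : σ →₀ ℕ) :
    MvPolynomial.coeff m (MvPolynomial.C a * MvPolynomial.X u * MvPolynomial.X v) =
      if Finsupp.single u 1 + Finsupp.single v 1 = m then a else 0 := by
  rw [MvPolynomial.X, MvPolynomial.X, MvPolynomial.C_apply, MvPolynomial.monomial_mul,
    MvPolynomial.monomial_mul, MvPolynomial.coeff_monomial]
  simp

/-- if `p(x) = Σ_{i≤n} c_i·D^i(x)` vanishes identically on a commutative
differential algebra over a field of characteristic zero, with `n ≥ 2` and `c_n ≠ 0`,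
then in the multilinear differential polynomial `q(x,y) = p(xy) − x·p(y) − y·p(x)`
(written in the variables `X (0,j) = D^j x`, `X (1,j) = D^j y`, expanding `p(xy)` via the
Leibniz formula) the coefficient of `D^{n−1}(x)·D(y)` is `n·c_n`; in particular `q ≠ 0`. -/
theorem coeff_q_eq_n_cn {k A : Type*} [Field k] [CharZero k] [CommRing A] [Algebra k A]
    (D : A → A) (hDlin : IsLinearMap k D)
    (hLeib : ∀ a b : A, D (a * b) = a * D b + D a * b)
    (n : ℕ) (hn : 2 ≤ n) (c : ℕ → A) (hcn : c n ≠ 0)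
    (hvanish : ∀ x : A, ∑ i ∈ range (n + 1), c i * D^[i] x = 0)
    (q : MvPolynomial (Fin 2 × ℕ) A)
    (hq : q =
      (∑ i ∈ range (n + 1), C (c i) *
          ∑ j ∈ range (i + 1), (i.choose j : MvPolynomial (Fin 2 × ℕ) A) *
            X ((0 : Fin 2), j) * X ((1 : Fin 2), i - j))
      - X ((0 : Fin 2), 0) * (∑ i ∈ range (n + 1), C (c i) * X ((1 : Fin 2), i))
      - X ((1 : Fin 2), 0) * (∑ i ∈ range (n + 1), C (c i) * X ((0 : Fin 2), i))) :
    MvPolynomial.coeff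
        (Finsupp.single ((0 : Fin 2), n - 1) 1 + Finsupp.single ((1 : Fin 2), 1) 1) q
      = n • c n ∧ q ≠ 0 := by
  set m : (Fin 2 × ℕ) →₀ ℕ :=
    Finsupp.single ((0 : Fin 2), n - 1) 1 + Finsupp.single ((1 : Fin 2), 1) 1 with hm
  -- equality conditions on monomials
  have hcond : ∀ u v : Fin 2 × ℕ,
      (Finsupp.single u 1 + Finsupp.single v 1 = m) ↔
        (u = ((0 : Fin 2), n - 1) ∧ v = ((1 : Fin 2), 1)) ∨
        (u = ((1 : Fin 2), 1) ∧ v = ((0 : Fin 2), n - 1)) := by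
    intro u v
    rw [hm, Finsupp.single_add_single_eq_single_add_single one_ne_zero one_ne_zero]
    simp
  have hmain : MvPolynomial.coeff m q = n • c n := by
    subst hq
    rw [MvPolynomial.coeff_sub, MvPolynomial.coeff_sub, MvPolynomial.coeff_sum]
    have h2 : ∀ i ∈ range (n+1),
        MvPolynomial.coeff m (MvPolynomial.C (c i) *
          ∑ j ∈ range (i + 1), (i.choose j : MvPolynomial (Fin 2 × ℕ) A) *
            X ((0 : Fin 2), j) * X ((1 : Fin 2), i - j)) =
        ∑ j ∈ range (i + 1),
          if Finsupp.single ((0 : Fin 2), j) 1 + Finsupp.single ((1 : Fin 2), i - j) 1 = m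
          then c i * (i.choose j : A) else 0 := by
      intro i _
      rw [Finset.mul_sum, MvPolynomial.coeff_sum]
      refine Finset.sum_congr rfl fun j _ => ?_
      rw [show MvPolynomial.C (c i) * ((i.choose j : MvPolynomial (Fin 2 × ℕ) A) *
            X ((0 : Fin 2), j) * X ((1 : Fin 2), i - j)) =
          MvPolynomial.C (c i * (i.choose j : A)) * X ((0 : Fin 2), j) * X ((1 : Fin 2), i - j) by
        rw [map_mul, map_natCast]; ring]
      rw [coeff_CXX]
    rw [Finset.sum_congr rfl h2]
    -- second piece vanishes
    have h3 : MvPolynomial.coeff m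
        (X ((0 : Fin 2), 0) * ∑ i ∈ range (n + 1), MvPolynomial.C (c i) * X ((1 : Fin 2), i)) = 0 := by
      rw [Finset.mul_sum, MvPolynomial.coeff_sum]
      refine Finset.sum_eq_zero fun i _ => ?_
      rw [show X ((0 : Fin 2), 0) * (MvPolynomial.C (c i) * X ((1 : Fin 2), i)) =
          MvPolynomial.C (c i) * X ((0 : Fin 2), 0) * X ((1 : Fin 2), i) by ring]
      rw [coeff_CXX, if_neg]
      rw [hcond]
      rintro (⟨h, -⟩ | ⟨h, -⟩) <;> simp [Prod.ext_iff] at h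
      omega
    have h4 : MvPolynomial.coeff m
        (X ((1 : Fin 2), 0) * ∑ i ∈ range (n + 1), MvPolynomial.C (c i) * X ((0 : Fin 2), i)) = 0 := by
      rw [Finset.mul_sum, MvPolynomial.coeff_sum]
      refine Finset.sum_eq_zero fun i _ => ?_
      rw [show X ((1 : Fin 2), 0) * (MvPolynomial.C (c i) * X ((0 : Fin 2), i)) =
          MvPolynomial.C (c i) * X ((1 : Fin 2), 0) * X ((0 : Fin 2), i) by ring]
      rw [coeff_CXX, if_neg]
      rw [hcond]
      rintro (⟨h, -⟩ | ⟨h, -⟩) <;> simp [Prod.ext_iff] at h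
    rw [h3, h4, sub_zero, sub_zero]
    -- evaluate double sum
    rw [Finset.sum_eq_single n]
    · rw [Finset.sum_eq_single (n - 1)]
      · rw [if_pos, Nat.choose_symm (by omega), Nat.choose_one_right]
        · rw [nsmul_eq_mul]; ring
        · rw [hcond]
          left
          constructor
          · rfl
          · have : n - (n - 1) = 1 := by omega
            rw [this]
      · intro j hj hjne
        rw [if_neg]
        rw [hcond]
        rintro (⟨h, -⟩ | ⟨h, -⟩) <;> simp [Prod.ext_iff] at h
        exact hjne h
      · intro h
        simp at h
    · intro i hi hine
      refine Finset.sum_eq_zero fun j hj => ?_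
      rw [if_neg]
      rw [hcond]
      simp only [Finset.mem_range] at hi hj
      rintro (⟨h1, h2⟩ | ⟨h1, h2⟩) <;> simp [Prod.ext_iff] at h1 h2
      omega
    · intro h
      simp at h
  refine ⟨hmain, fun h => hcn ?_⟩
  rw [h, MvPolynomial.coeff_zero] at hmain
  have h' : ((n : k)) • c n = 0 := by
    rw [Nat.cast_smul_eq_nsmul]; exact hmain.symm
  rcases smul_eq_zero.mp h' with h'' | h''
  · exact absurd h'' (by exact_mod_cast (by omega : n ≠ 0))
  · exact h''
end

section
/- Let A be a prime commutative differential algebra over a field k of characteristic zero with nonzero derivation. Then for any nonzero multilinear differential polynomial p ∈ A{x1, …, xn} there exist a1, …, an ∈ A such that p(a1, …, an) ≠ 0. -/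
open MvPolynomial Finset

/-- A differential polynomial (written as a polynomial over `A` in the variables
`X (i, j) = x_i^{(j)}`) is multilinear if each of its monomials has total degree
exactly `1` in the variables attached to each `x_i`. -/
def IsMultilinearDiffPoly {A : Type*} [CommRing A] {n : ℕ}
    (p : MvPolynomial (Fin n × ℕ) A) : Prop :=
  ∀ m ∈ p.support, ∀ i : Fin n, (m.sum fun v e => if v.1 = i then e else 0) = 1

/-!
A linear differential operator `L = ∑ c_j D^j` that kills all of `A` is zero. Indeed
`y ↦ L (y * b) - L y * b` is an operator of lower order whose top coefficient is
`(N + 1) • c_{N+1} * D b`; by induction this vanishes for every `b`, so `c_{N+1}` annihilates the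
ideal generated by `D(A)`. That ideal and its annihilator are differential ideals with zero
product, and `A` is prime, so the annihilator is zero.

A multilinear differential polynomial is `∑_φ c_φ ∏_i x_i^{(φ i)}`. Fixing all arguments but the
first turns its evaluation into such an operator applied to the first argument, so induction on
the number of variables shows that all `c_φ` vanish.
-/

namespace Derivation

section CommSemiring

variable {R A : Type*} [CommSemiring R] [CommSemiring A] [Algebra R A] (D : Derivation R A A)

theorem iterate_apply_mul (n : ℕ) (a b : A) :
    D^[n] (a * b) = ∑ ij ∈ antidiagonal n, n.choose ij.1 • (D^[ij.1] a * D^[ij.2] b) := by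
  induction n with
  | zero => simp
  | succ n ih =>
    rw [sum_antidiagonal_choose_succ_nsmul (fun i j => D^[i] a * D^[j] b) n]
    simp only [Function.iterate_succ_apply', ih, map_sum, map_nsmul, leibniz, smul_eq_mul,
      smul_add, ← sum_add_distrib]
    refine sum_congr rfl fun ij hij => ?_
    rw [n.choose_symm_of_eq_add (mem_antidiagonal.1 hij).symm]
    ring

end CommSemiring

section CommRing

variable {R A : Type*} [CommSemiring R] [CommRing A] [Algebra R A] {D : Derivation R A A}

theorem isDifferentialIdeal_span_range : IsDifferentialIdeal D (Ideal.span (Set.range D)) := by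
  intro a ha
  induction ha using Submodule.span_induction with
  | mem x hx => exact Ideal.subset_span ⟨x, rfl⟩
  | zero => simp
  | add x y _ _ hx hy => simpa using add_mem hx hy
  | smul r x _ hx =>
    rw [smul_eq_mul, leibniz, smul_eq_mul, smul_eq_mul]
    exact add_mem (Ideal.mul_mem_left _ _ hx) (Ideal.mul_mem_left _ _ (Ideal.subset_span ⟨r, rfl⟩))

theorem _root_.IsDifferentialIdeal.annihilator {I : Ideal A} (hI : IsDifferentialIdeal D I) :
    IsDifferentialIdeal D I.annihilator := by
  intro x hx
  rw [Submodule.mem_annihilator] at hx ⊢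
  intro j hj
  have hxj : D (x * j) = 0 := by rw [← smul_eq_mul, hx j hj, map_zero]
  rw [leibniz, hx _ (hI j hj), zero_add, smul_eq_mul, mul_comm] at hxj
  exact hxj

theorem eq_zero_of_forall_mul_apply_eq_zero (hprime : IsPrimeDifferentialRing D) (hD : D ≠ 0)
    {c : A} (h : ∀ b, c * D b = 0) : c = 0 := by
  set J := Ideal.span (Set.range D)
  have hJ : J ≠ ⊥ := fun hJ => hD <| ext fun b => Ideal.span_eq_bot.1 hJ _ ⟨b, rfl⟩
  have hann : J.annihilator = ⊥ := by
    by_contra hann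
    exact hprime _ _ isDifferentialIdeal_span_range.annihilator
      isDifferentialIdeal_span_range hann hJ (Submodule.annihilator_mul J)
  have hc : c ∈ J.annihilator := by
    rw [Submodule.mem_annihilator_span]
    rintro ⟨_, b, rfl⟩
    exact h b
  rwa [hann, Ideal.mem_bot] at hc

theorem iterate_apply_mul_sub_mul (n : ℕ) (a b : A) :
    D^[n] (a * b) - D^[n] a * b = ∑ i ∈ range n, n.choose i • (D^[i] a * D^[n - i] b) := by
  rw [iterate_apply_mul, Nat.sum_antidiagonal_eq_sum_range_succ
    (fun i j => n.choose i • (D^[i] a * D^[j] b)), sum_range_succ]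
  simp

theorem sum_mul_iterate_apply_mul_sub (c : ℕ → A) (M : ℕ) (y b : A) :
    ∑ j ∈ range (M + 1), c j * D^[j] (y * b) - (∑ j ∈ range (M + 1), c j * D^[j] y) * b =
      ∑ i ∈ range M, (∑ j ∈ Ico (i + 1) (M + 1), c j * (j.choose i • D^[j - i] b)) * D^[i] y := by
  calc ∑ j ∈ range (M + 1), c j * D^[j] (y * b) - (∑ j ∈ range (M + 1), c j * D^[j] y) * b
      = ∑ j ∈ range (M + 1), ∑ i ∈ range j, c j * (j.choose i • (D^[i] y * D^[j - i] b)) := by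
        simp only [sum_mul, ← sum_sub_distrib, mul_assoc, ← mul_sub, iterate_apply_mul_sub_mul,
          mul_sum]
    _ = ∑ i ∈ range M, ∑ j ∈ Ico (i + 1) (M + 1),
          c j * (j.choose i • (D^[i] y * D^[j - i] b)) :=
        sum_comm' fun j i => by simp only [mem_range, mem_Ico]; omega
    _ = _ := by
        simp only [sum_mul]
        refine sum_congr rfl fun i _ => sum_congr rfl fun j _ => ?_
        rw [mul_smul_comm, mul_smul_comm, smul_mul_assoc]
        ring

variable [IsAddTorsionFree A]

theorem eq_zero_of_forall_sum_mul_iterate_apply_eq_zero (hprime : IsPrimeDifferentialRing D)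
    (hD : D ≠ 0) {N : ℕ} {c : ℕ → A} (h : ∀ y, ∑ j ∈ range (N + 1), c j * D^[j] y = 0) :
    ∀ j ≤ N, c j = 0 := by
  induction N generalizing c with
  | zero =>
    intro j hj
    obtain rfl : j = 0 := by omega
    simpa using h 1
  | succ N ih =>
    have htop : c (N + 1) = 0 := by
      refine eq_zero_of_forall_mul_apply_eq_zero hprime hD fun b => ?_
      have hcomm := ih (c := fun i => ∑ j ∈ Ico (i + 1) (N + 2), c j * (j.choose i • D^[j - i] b))
        (fun y => by rw [← sum_mul_iterate_apply_mul_sub, h, h, zero_mul, sub_zero]) N le_rfl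
      rw [Nat.Ico_succ_singleton, sum_singleton, Nat.choose_succ_self_right,
        Nat.add_sub_cancel_left, Function.iterate_one, mul_smul_comm] at hcomm
      exact (smul_eq_zero.1 hcomm).resolve_left N.succ_ne_zero
    intro j hj
    rcases hj.lt_or_eq with hj | rfl
    · exact ih (fun y => by simpa [sum_range_succ _ (N + 1), htop] using h y) j (by omega)
    · exact htop

theorem eq_zero_of_forall_sum_fin_mul_iterate_apply_eq_zero (hprime : IsPrimeDifferentialRing D)
    (hD : D ≠ 0) {N : ℕ} {c : Fin (N + 1) → A} (h : ∀ y, ∑ j, c j * D^[j] y = 0) : c = 0 := by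
  funext j
  simpa using eq_zero_of_forall_sum_mul_iterate_apply_eq_zero hprime hD
    (c := fun j => c (Fin.ofNat (N + 1) j))
    (fun y => by rw [← Fin.sum_univ_eq_sum_range]; simpa using h y) j j.is_le

theorem eq_zero_of_forall_sum_mul_prod_iterate_apply_eq_zero (hprime : IsPrimeDifferentialRing D)
    (hD : D ≠ 0) {n N : ℕ} {c : (Fin n → Fin (N + 1)) → A}
    (h : ∀ a : Fin n → A, ∑ φ, c φ * ∏ i, D^[φ i] (a i) = 0) : c = 0 := by
  induction n with
  | zero =>
    funext φ
    have h0 := h 0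
    simp only [univ_unique, sum_singleton, univ_eq_empty, prod_empty, mul_one] at h0
    exact (congrArg c (Subsingleton.elim φ _)).trans h0
  | succ n ih =>
    have hslice (j : Fin (N + 1)) : (fun ψ => c (Fin.cons j ψ)) = 0 := by
      refine ih fun a => congrFun (eq_zero_of_forall_sum_fin_mul_iterate_apply_eq_zero hprime hD
        (c := fun j => ∑ ψ, c (Fin.cons j ψ) * ∏ i, D^[ψ i] (a i)) fun y => ?_) j
      rw [← h (Fin.cons y a), ← (Fin.consEquiv fun _ => Fin (N + 1)).sum_comp,
        Fintype.sum_prod_type]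
      refine sum_congr rfl fun k _ => ?_
      rw [sum_mul]
      refine sum_congr rfl fun ψ _ => ?_
      simp only [Fin.consEquiv, Equiv.coe_fn_mk, Fin.prod_univ_succ, Fin.cons_zero, Fin.cons_succ]
      ring
    funext φ
    rw [← Fin.cons_self_tail φ]
    exact congrFun (hslice (φ 0)) (Fin.tail φ)

end CommRing

end Derivation

section Multilinear

variable {ι : Type*} [Fintype ι]

noncomputable def multilinearMonomial (φ : ι → ℕ) : (ι × ℕ) →₀ ℕ :=
  ∑ i, Finsupp.single (i, φ i) 1

theorem multilinearMonomial_apply (φ : ι → ℕ) (i : ι) (j : ℕ) :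
    multilinearMonomial φ (i, j) = if φ i = j then 1 else 0 := by
  classical
  simp only [multilinearMonomial, Finsupp.finsetSum_apply, Finsupp.single_apply, Prod.mk.injEq,
    ite_and, sum_ite_eq', mem_univ, if_true]

theorem multilinearMonomial_injective : Function.Injective (multilinearMonomial (ι := ι)) := by
  intro φ ψ h
  funext i
  simpa [multilinearMonomial_apply, eq_comm] using DFunLike.congr_fun h (i, φ i)

theorem eval_monomial_multilinearMonomial {R : Type*} [CommSemiring R] (f : ι × ℕ → R)
    (φ : ι → ℕ) (r : R) :
    eval f (monomial (multilinearMonomial φ) r) = r * ∏ i, f (i, φ i) := by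
  rw [eval_monomial, multilinearMonomial,
    ← Finsupp.prod_finsetSum_index (fun _ => pow_zero _) (fun _ _ _ => pow_add _ _ _)]
  simp

theorem exists_eq_multilinearMonomial [DecidableEq ι] {m : (ι × ℕ) →₀ ℕ}
    (hm : ∀ i, (m.sum fun v e => if v.1 = i then e else 0) = 1) :
    ∃ φ, m = multilinearMonomial φ := by
  have hfiber (i : ι) : ∃ v, m.filter (·.1 = i) = Finsupp.single v 1 := by
    rw [← Finsupp.sum_eq_one_iff, ← hm i, Finsupp.sum_filter_index, Finsupp.support_filter,
      Finset.sum_filter]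
    rfl
  choose v hv using hfiber
  have hvi (i : ι) : (v i).1 = i := by
    by_contra hne
    simpa [hv] using Finsupp.filter_apply_neg (·.1 = i) m hne
  refine ⟨fun i => (v i).2, Finsupp.ext fun ⟨i, j⟩ => ?_⟩
  rw [multilinearMonomial_apply, ← Finsupp.filter_apply_pos (·.1 = i) m (a := (i, j)) rfl, hv,
    Finsupp.single_apply]
  simp only [Prod.ext_iff, hvi, true_and]

theorem IsMultilinearDiffPoly.exists_eq_sum_monomial {A : Type*} [CommRing A] {n : ℕ}
    {p : MvPolynomial (Fin n × ℕ) A} (hp : IsMultilinearDiffPoly p) :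
    ∃ (N : ℕ) (c : (Fin n → Fin (N + 1)) → A),
      p = ∑ φ, monomial (multilinearMonomial fun i => (φ i : ℕ)) (c φ) := by
  classical
  set N := p.vars.sup Prod.snd
  set mono := fun φ : Fin n → Fin (N + 1) => multilinearMonomial fun i => (φ i : ℕ)
  have hmono : Function.Injective mono :=
    multilinearMonomial_injective.comp (Fin.val_injective.comp_left)
  have hsupport : p.support ⊆ univ.image mono := by
    intro m hm
    obtain ⟨φ, rfl⟩ := exists_eq_multilinearMonomial (hp m hm)
    have hφ (i : Fin n) : φ i ≤ N :=
      le_sup (f := Prod.snd) ((mem_vars_iff_mem_support (i, φ i)).2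
        ⟨_, hm, by simp [multilinearMonomial_apply]⟩)
    exact mem_image.2 ⟨fun i => ⟨φ i, Nat.lt_succ_of_le (hφ i)⟩, mem_univ _, rfl⟩
  refine ⟨N, fun φ => coeff (mono φ) p, ?_⟩
  calc p = ∑ m ∈ p.support, monomial m (coeff m p) := as_sum p
    _ = ∑ m ∈ univ.image mono, monomial m (coeff m p) :=
      sum_subset hsupport fun m _ hm => by rw [notMem_support_iff.1 hm, monomial_zero]
    _ = _ := sum_image hmono.injOn

end Multilinear

/-- a nonzero multilinear differential polynomial over a prime commutative
differential algebra over a field of characteristic zero with nonzero derivation does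
not vanish identically. -/
theorem multilinear_diffPoly_not_identity {k A : Type*} [Field k] [CharZero k] [CommRing A]
    [Algebra k A]
    (D : A → A) (hDlin : IsLinearMap k D)
    (hLeib : ∀ a b : A, D (a * b) = a * D b + D a * b)
    (hprime : IsPrimeDifferentialRing D)
    (hD : D ≠ 0)
    (n : ℕ) (p : MvPolynomial (Fin n × ℕ) A)
    (hp : p ≠ 0) (hmult : IsMultilinearDiffPoly p) :
    ∃ a : Fin n → A,
      MvPolynomial.eval (fun v : Fin n × ℕ => D^[v.2] (a v.1)) p ≠ 0 := by
  let δ : Derivation k A A :=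
    Derivation.mk' (IsLinearMap.mk' D hDlin) fun a b => by simp [hLeib, mul_comm]
  have : IsAddTorsionFree A := .of_isTorsionFree k A
  obtain ⟨N, c, rfl⟩ := hmult.exists_eq_sum_monomial
  by_contra! hzero
  have hc : c = 0 := Derivation.eq_zero_of_forall_sum_mul_prod_iterate_apply_eq_zero (D := δ)
    hprime (fun h => hD (congrArg DFunLike.coe h)) fun a => by
      have := hzero a
      simp only [map_sum, eval_monomial_multilinearMonomial] at this
      exact this
  simp [hc] at hp
end

section
/- Every semiprime Lie algebra L admits an embedding into a product ∏_{α∈Λ} L/I_α where each quotient L/I_α is a prime Lie algebra; i.e., in a semiprime Lie algebra the zero ideal is an intersection of ideals I_α with L/I_α prime, and the diagonal map L → ∏_α L/I_α is injective. -/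
/-!
Following Amitsur, call a set `S` of elements of `L` an m-system if any two of its elements
`a, b` have a third `c ∈ S` in `⁅⟨a⟩, ⟨b⟩⁆`, where `⟨a⟩` is the ideal generated by `a`.
An ideal maximal among those avoiding an m-system has prime quotient. In a semiprime Lie
algebra every `x ≠ 0` starts a sequence `x = x₀, x₁, …` of nonzero elements with
`xₙ₊₁ ∈ ⁅⟨xₙ⟩, ⟨xₙ⟩⁆`; the ideals `⟨xₙ⟩` decrease, so the sequence is an m-system, and
Zorn's lemma (using that `⟨a⟩` is a compact element of the lattice of ideals) yields an ideal
with prime quotient avoiding `x`.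
-/

universe u v

/-- A Lie algebra is prime if the bracket of any two nonzero ideals is nonzero. -/
def IsPrimeLie (k : Type u) (L : Type v) [CommRing k] [LieRing L] [LieAlgebra k L] : Prop :=
  ∀ I J : LieIdeal k L, I ≠ ⊥ → J ≠ ⊥ → ⁅I, J⁆ ≠ ⊥

/-- A Lie algebra is semiprime if the bracket of any nonzero ideal with itself is
nonzero. -/
def IsSemiprimeLie (k : Type u) (L : Type v) [CommRing k] [LieRing L] [LieAlgebra k L] :
    Prop :=
  ∀ I : LieIdeal k L, I ≠ ⊥ → ⁅I, I⁆ ≠ ⊥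

open LieSubmodule

section

variable {k : Type u} {L : Type v} [CommRing k] [LieRing L] [LieAlgebra k L]

namespace LieIdeal

def mkQ (P : LieIdeal k L) : L →ₗ⁅k⁆ L ⧸ P :=
  { (P : Submodule k L).mkQ with map_lie' := rfl }

variable (P : LieIdeal k L)

theorem mkQ_surjective : Function.Surjective P.mkQ := Quot.mk_surjective

@[simp]
theorem ker_mkQ : P.mkQ.ker = P := by
  ext x
  exact LieHom.mem_ker.trans LieSubmodule.Quotient.mk_eq_zero'

theorem map_comap_mkQ (J : LieIdeal k (L ⧸ P)) : map P.mkQ (comap P.mkQ J) = J := by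
  rw [map_comap_eq (P.mkQ.isIdealMorphism_of_surjective P.mkQ_surjective),
    LieHom.idealRange_eq_top_of_surjective _ P.mkQ_surjective, top_inf_eq]

theorem lt_comap_mkQ {J : LieIdeal k (L ⧸ P)} (hJ : J ≠ ⊥) : P < comap P.mkQ J := by
  refine lt_of_le_of_ne (P.ker_mkQ.symm.le.trans (LieHom.ker_le_comap _ J)) fun hP => hJ ?_
  rw [← P.map_comap_mkQ J, ← hP, map_eq_bot_iff, ker_mkQ]

theorem isPrimeLie_quotient_of_lie_not_le
    (h : ∀ I J : LieIdeal k L, P < I → P < J → ¬ ⁅I, J⁆ ≤ P) : IsPrimeLie k (L ⧸ P) := by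
  intro I J hI hJ hIJ
  refine h _ _ (P.lt_comap_mkQ hI) (P.lt_comap_mkQ hJ) ?_
  calc ⁅comap P.mkQ I, comap P.mkQ J⁆ ≤ comap P.mkQ ⁅I, J⁆ := comap_bracket_le _
    _ = P := by rw [hIJ]; exact P.ker_mkQ

end LieIdeal

variable (k) in
def IsLieMSystem (S : Set L) : Prop :=
  ∀ a ∈ S, ∀ b ∈ S, ∃ c ∈ S, c ∈ ⁅(lieSpan k L {a} : LieIdeal k L), lieSpan k L {b}⁆

theorem IsLieMSystem.isPrimeLie_quotient {S : Set L} (hS : IsLieMSystem k S) {P : LieIdeal k L}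
    (hP : Maximal (fun I : LieIdeal k L => ∀ s ∈ S, s ∉ I) P) : IsPrimeLie k (L ⧸ P) := by
  refine P.isPrimeLie_quotient_of_lie_not_le fun I J hI hJ hIJ => ?_
  have meets : ∀ {I : LieIdeal k L}, P < I → ∃ s ∈ S, lieSpan k L {s} ≤ I := fun hI => by
    simpa [lieSpan_le] using hP.not_prop_of_gt hI
  obtain ⟨a, haS, haI⟩ := meets hI
  obtain ⟨b, hbS, hbJ⟩ := meets hJ
  obtain ⟨c, hcS, hc⟩ := hS a haS b hbS
  exact hP.prop c hcS (hIJ (mono_lie haI hbJ hc))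

theorem exists_maximal_lieIdeal_forall_notMem {S : Set L} (hS : (0 : L) ∉ S) :
    ∃ P : LieIdeal k L, Maximal (fun I : LieIdeal k L => ∀ s ∈ S, s ∉ I) P := by
  have chain_bounded (c : Set (LieIdeal k L)) (hcS : ∀ I ∈ c, ∀ s ∈ S, s ∉ I)
      (hc : IsChain (· ≤ ·) c) (hne : c.Nonempty) : ∀ s ∈ S, s ∉ sSup c := fun s hs hsc => by
    obtain ⟨J, hJc, hsJ⟩ := (CompleteLattice.isCompactElement_iff_le_of_directed_sSup_le _ _).mp
      (isCompactElement_lieSpan_singleton k L s) c hne hc.directedOn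
      (lieSpan_le.mpr (Set.singleton_subset_iff.mpr hsc))
    exact hcS J hJc s hs (hsJ (subset_lieSpan rfl))
  obtain ⟨P, -, hP⟩ := zorn_le_nonempty₀ {I : LieIdeal k L | ∀ s ∈ S, s ∉ I}
    (fun c hcS hc I hI => ⟨sSup c, chain_bounded c hcS hc ⟨I, hI⟩, fun _ => le_sSup⟩) ⊥
    (fun s hs hs0 => hS ((LieSubmodule.mem_bot s).mp hs0 ▸ hs))
  exact ⟨P, hP⟩

theorem IsSemiprimeLie.exists_ne_zero_mem_lie_lieSpan (hL : IsSemiprimeLie k L) {a : L}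
    (ha : a ≠ 0) : ∃ b ∈ ⁅(lieSpan k L {a} : LieIdeal k L), lieSpan k L {a}⁆, b ≠ 0 := by
  have hspan : (lieSpan k L {a} : LieIdeal k L) ≠ ⊥ := by simpa [lieSpan_eq_bot_iff] using ha
  simpa [LieSubmodule.eq_bot_iff] using hL _ hspan

theorem IsSemiprimeLie.exists_isLieMSystem (hL : IsSemiprimeLie k L) {x : L} (hx : x ≠ 0) :
    ∃ S : Set L, IsLieMSystem k S ∧ x ∈ S ∧ (0 : L) ∉ S := by
  have step (a : L) :
      ∃ b, a ≠ 0 → b ≠ 0 ∧ b ∈ ⁅(lieSpan k L {a} : LieIdeal k L), lieSpan k L {a}⁆ := by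
    by_cases ha : a = 0
    · exact ⟨0, fun h => (h ha).elim⟩
    · obtain ⟨b, hb, hb0⟩ := hL.exists_ne_zero_mem_lie_lieSpan ha
      exact ⟨b, fun _ => ⟨hb0, hb⟩⟩
  choose f hf using step
  let seq (n : ℕ) : L := f^[n] x
  have seq_succ (n : ℕ) : seq (n + 1) = f (seq n) := Function.iterate_succ_apply' f n x
  have seq_ne_zero (n : ℕ) : seq n ≠ 0 := by
    induction n with
    | zero => exact hx
    | succ n ih => exact seq_succ n ▸ (hf _ ih).1
  have seq_succ_mem (n : ℕ) : seq (n + 1) ∈ ⁅(lieSpan k L {seq n} : LieIdeal k L),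
      lieSpan k L {seq n}⁆ := seq_succ n ▸ (hf _ (seq_ne_zero n)).2
  have span_antitone : Antitone fun n => (lieSpan k L {seq n} : LieIdeal k L) :=
    antitone_nat_of_succ_le fun n => lieSpan_le.mpr <| Set.singleton_subset_iff.mpr <|
      lie_le_right _ _ (seq_succ_mem n)
  refine ⟨Set.range seq, ?_, ⟨0, rfl⟩, fun ⟨n, hn⟩ => seq_ne_zero n hn⟩
  rintro _ ⟨n, rfl⟩ _ ⟨m, rfl⟩
  exact ⟨seq (max n m + 1), ⟨_, rfl⟩, mono_lie (span_antitone (le_max_left n m))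
    (span_antitone (le_max_right n m)) (seq_succ_mem _)⟩

theorem IsSemiprimeLie.exists_isPrimeLie_quotient_notMem (hL : IsSemiprimeLie k L) {x : L}
    (hx : x ≠ 0) : ∃ P : LieIdeal k L, IsPrimeLie k (L ⧸ P) ∧ x ∉ P := by
  obtain ⟨S, hS, hxS, h0S⟩ := hL.exists_isLieMSystem hx
  obtain ⟨P, hP⟩ := exists_maximal_lieIdeal_forall_notMem (k := k) h0S
  exact ⟨P, hS.isPrimeLie_quotient hP, hP.prop x hxS⟩

end

/-- in a semiprime Lie algebra the zero ideal is an intersection of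
ideals `I_α` with prime quotients `L/I_α`; equivalently, the diagonal map
`L → ∏_α L/I_α` is injective. -/
theorem semiprime_embeds_in_product_of_primes (k : Type u) (L : Type v) [Field k]
    [LieRing L] [LieAlgebra k L] (hsemi : IsSemiprimeLie k L) :
    ∃ (Λ : Type (max u v)) (I : Λ → LieIdeal k L),
      (∀ α : Λ, IsPrimeLie k (L ⧸ I α)) ∧
      ∀ x : L, (∀ α : Λ, (LieSubmodule.Quotient.mk (N := I α) x : L ⧸ I α) = 0) → x = 0 := by
  refine ⟨ULift.{u} {P : LieIdeal k L // IsPrimeLie k (L ⧸ P)}, fun α => α.down.1,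
    fun α => α.down.2, fun x hx => ?_⟩
  by_contra hx0
  obtain ⟨P, hP, hxP⟩ := hsemi.exists_isPrimeLie_quotient_notMem hx0
  exact hxP ((LieSubmodule.Quotient.mk_eq_zero').mp (hx ⟨⟨P, hP⟩⟩))
end

section
/- Let C be a commutative differential algebra, L a prime Lie subalgebra of Diff C with μ(L) = {a ∈ C : a∂ ∈ L}, and J a maximal element of the set of differential ideals of C intersecting μ(L) trivially. Then C/J is a prime differential algebra. -/
/-- let `C` be a commutative differential algebra, `L` a prime Lie
subalgebra of `Diff C` (primeness: the bracket of any two nonzero Lie ideals of `L`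
is nonzero), and `J` a maximal element among the differential ideals of `C` meeting
`μ(L) = {a : a∂ ∈ L}` trivially.  Then `C/J` is a prime differential algebra, i.e.
for any two differential ideals of `C` properly containing `J`, their product is not
contained in `J`. -/
theorem quotient_is_prime {k C : Type*} [Field k] [CommRing C] [Algebra k C]
    (D : C → C) (hDlin : IsLinearMap k D)
    (hLeib : ∀ a b : C, D (a * b) = a * D b + D a * b)
    (L : Submodule k C)
    (hLlie : ∀ a ∈ L, ∀ b ∈ L, diffBracket D a b ∈ L)
    (hLprime : ∀ K1 K2 : Submodule k C,
      K1 ≤ L → K2 ≤ L →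
      (∀ a ∈ L, ∀ b ∈ K1, diffBracket D a b ∈ K1) →
      (∀ a ∈ L, ∀ b ∈ K2, diffBracket D a b ∈ K2) →
      K1 ≠ ⊥ → K2 ≠ ⊥ →
      ∃ a ∈ K1, ∃ b ∈ K2, diffBracket D a b ≠ 0)
    (J : Ideal C)
    (hJ : Maximal (fun J : Ideal C =>
      IsDifferentialIdeal D J ∧ ∀ a ∈ J, a ∈ L → a = 0) J) :
    ∀ I1 I2 : Ideal C, IsDifferentialIdeal D I1 → IsDifferentialIdeal D I2 →
      J < I1 → J < I2 → ¬ (I1 * I2 ≤ J) := by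
  intro I1 I2 hI1 hI2 hJ1 hJ2 hle
  -- Lie ideals K_i = I_i ∩ L
  set K1 : Submodule k C := (I1.restrictScalars k) ⊓ L with hK1def
  set K2 : Submodule k C := (I2.restrictScalars k) ⊓ L with hK2def
  have hbr : ∀ (I : Ideal C), IsDifferentialIdeal D I →
      ∀ a ∈ L, ∀ b ∈ (I.restrictScalars k) ⊓ L, diffBracket D a b ∈ (I.restrictScalars k) ⊓ L := by
    intro I hI a ha b hb
    refine ⟨?_, hLlie a ha b hb.2⟩
    have hb1 : b ∈ I := hb.1
    have : a * D b - D a * b ∈ I :=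
      sub_mem (I.mul_mem_left a (hI b hb1)) (I.mul_mem_left (D a) hb1)
    exact this
  -- nontriviality of K_i
  have hne : ∀ (I : Ideal C), IsDifferentialIdeal D I → J < I →
      (I.restrictScalars k) ⊓ L ≠ ⊥ := by
    intro I hI hJI hbot
    have hP : IsDifferentialIdeal D I ∧ ∀ a ∈ I, a ∈ L → a = 0 := by
      refine ⟨hI, fun a haI haL => ?_⟩
      have : a ∈ (I.restrictScalars k) ⊓ L := ⟨haI, haL⟩
      rw [hbot] at this
      simpa using this
    exact absurd (hJ.2 hP hJI.le) (not_le_of_gt hJI)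
  obtain ⟨a, ha, b, hb, hab⟩ := hLprime K1 K2 inf_le_right inf_le_right
    (hbr I1 hI1) (hbr I2 hI2) (hne I1 hI1 hJ1) (hne I2 hI2 hJ2)
  apply hab
  have hmem : diffBracket D a b ∈ J := by
    apply hle
    have h1 : a * D b ∈ I1 * I2 := Ideal.mul_mem_mul ha.1 (hI2 b hb.1)
    have h2 : D a * b ∈ I1 * I2 := Ideal.mul_mem_mul (hI1 a ha.1) hb.1
    exact sub_mem h1 h2
  exact hJ.1.2 _ hmem (hLlie a ha.2 b hb.2)
end
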